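/- In a biternary system (A, α, β) (satisfying α(x,x,y) = y, α(β(x,y,z),y,z) = x, β(α(x,y,z),y,z) = x), one has β(y,x,y) = x for all x, y, and for a fixed element a, the ternary operation Ψ(x,y,z) = β(α(x,y,a), z, a) satisfies the Mal'cev identities Ψ(x,x,z) = z and Ψ(x,z,z) = x. -/

import Mathlib

theorem beta_self_of_alpha_self {A : Type*} {α β : A → A → A → A}
    (h1 : ∀ x y, α x x y = y) (h3 : ∀ x y z, β (α x y z) y z = x) (x y : A) :
    β y x y = x := by
  simpa only [h1] using h3 x x y

theorem stmt_12_general {A : Type*} (α β : A → A → A → A)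
    (h1 : ∀ x y, α x x y = y)
    (h3 : ∀ x y z, β (α x y z) y z = x)
    (a : A) :
    (∀ x y, β y x y = x) ∧
    (let Ψ : A → A → A → A := fun x y z => β (α x y a) z a
     (∀ x z, Ψ x x z = z) ∧ (∀ x z, Ψ x z z = x)) := by
  have beta_self := beta_self_of_alpha_self h1 h3
  refine ⟨beta_self, fun x z => ?_, fun x z => h3 x z a⟩
  show β (α x x a) z a = z
  rw [h1, beta_self]

/-- In a biternary system: β(y,x,y) = x, and Ψ(x,y,z) = β(α(x,y,a),z,a)
is a Mal'cev operation. -/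
theorem stmt_12 {A : Type*} (α β : A → A → A → A)
    (h1 : ∀ x y, α x x y = y)
    (h2 : ∀ x y z, α (β x y z) y z = x)
    (h3 : ∀ x y z, β (α x y z) y z = x)
    (a : A) :
    (∀ x y, β y x y = x) ∧
    (let Ψ : A → A → A → A := fun x y z => β (α x y a) z a
     (∀ x z, Ψ x x z = z) ∧ (∀ x z, Ψ x z z = x)) :=
  stmt_12_general α β h1 h3 a
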